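/- arXiv:1810.11532 — 2 statements merged into one kernel-verified Lean document; each statement's English description precedes it below -/
import Mathlib

section
/- Let L ≥ 1 and let P = [p_{i,j}] and P' = [p'_{i,j}] (i,j ∈ {0,1,…,L}) be upper triangular column-stochastic real matrices with p_{0,0} = p'_{0,0} = 1 satisfying: (i) p'_{j,j} ≥ p_{j,j} for every j ∈ {1,…,L}; (ii) Σ_{l=0}^{i−1} (p_{l,j} − p'_{l,j}) ≥ 0 for all 1 ≤ i < j ≤ L; (iii) Σ_{l=0}^{i} (p'_{l,j−1} − p'_{l,j}) ≥ 0 for all 0 ≤ i < j−1 with j ≤ L; and additionally the diagonal entries λ'_j := p'_{j,j} (j = 1,…,L) are pairwise distinct. Let R = [p_{i,j}]_{i,j=1,…,L} and R' = [p'_{i,j}]_{i,j=1,…,L}, and let p'_{i,j,k} denote the power factors of R'. Let e = (e_1,…,e_L)ᵀ satisfy 0 ≤ e_1 ≤ e_2 ≤ … ≤ e_L and let p⁰ ∈ ℝᴸ be entrywise nonnegative. Then for every t ≥ 1, eᵀ Rᵗ p⁰ ≤ Σ_{k=1}^{L} Σ_{i=1}^{k} Σ_{j=k}^{L} e_i ·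 p'_{i,j,k} · p⁰_j · (λ'_k)^{t−1}. -/
open Matrix

/-- The power factors `p_{i,j,k}` of an (`0`-based, `ℕ`-indexed) upper triangular
matrix `a` with pairwise distinct diagonal entries. -/
noncomputable def powerFactor (a : ℕ → ℕ → ℝ) : ℕ → ℕ → ℕ → ℝ
  | i, j, k =>
    if i = j ∧ j = k then a j j
    else if hc : k < i ∨ j < k then 0
    else if hd : k < j then
      (∑ l ∈ (Finset.Ico k j).attach, powerFactor a i l.1 k * a l.1 j) / (a k k - a j j)
    else a i j - ∑ l ∈ (Finset.Ico i j).attach, powerFactor a i j l.1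
  termination_by i j k => j + k
  decreasing_by
  · have := l.2; simp only [Finset.mem_Ico] at this; omega
  · have := l.2; simp only [Finset.mem_Ico] at this; omega

open Finset

/-!
Conditions (i) and (ii) say, after summation by parts, that each column of `P'` stochastically
dominates the corresponding column of `P`, so `v ᵥ* P ≤ v ᵥ* P'` for every increasing `v`;
condition (iii) says that the columns of `P'` increase stochastically, so `v ᵥ* P'` is again
increasing. By induction `e ᵥ* P ^ t ≤ e ᵥ* P' ^ t` for the increasing error vector `e`, and as
`P`, `P'` are upper triangular with `e 0 = 0` this restricts to `eᵀ Rᵗ ≤ eᵀ R'ᵗ`. Finally, the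
diagonal of `R'` being injective, the power factors are the coefficients of the expansion
`(R' ^ t) i j = ∑ k, p'_{i,j,k} λ'_k ^ (t - 1)`.
-/

theorem Fin.monotone_of_monotone_succ {α : Type*} [Preorder α] {n : ℕ} {e : Fin (n + 1) → α}
    (h0 : ∀ i : Fin n, e 0 ≤ e i.succ) (hsucc : Monotone fun i : Fin n => e i.succ) :
    Monotone e := by
  intro i j hij
  induction i using Fin.cases with
  | zero => induction j using Fin.cases with
    | zero => exact le_rfl
    | succ j => exact h0 j
  | succ i => induction j using Fin.cases with
    | zero => exact absurd hij (Fin.succ_pos i).not_ge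
    | succ j => exact hsucc (Fin.succ_le_succ_iff.1 hij)

theorem sum_mul_le_mul_sum_of_prefix_sum_nonneg {n : ℕ} {v d : Fin (n + 1) → ℝ}
    (hv : Monotone v) (hprefix : ∀ i, 0 ≤ ∑ l ∈ univ.filter (· < i), d l) :
    ∑ i, v i * d i ≤ v (Fin.last n) * ∑ i, d i := by
  induction n with
  | zero => simp
  | succ n ih =>
    have hprefix_castSucc : ∀ i : Fin (n + 1),
        ∑ l ∈ univ.filter (· < i.castSucc), d l = ∑ l ∈ univ.filter (· < i), d l.castSucc := by
      intro i
      simp [sum_filter, Fin.sum_univ_castSucc, (Fin.castSucc_lt_last i).not_gt]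
    have hinit : 0 ≤ ∑ i : Fin (n + 1), d i.castSucc := by
      simpa [sum_filter, Fin.sum_univ_castSucc] using hprefix (Fin.last _)
    have hrestrict := ih (v := v ∘ Fin.castSucc) (d := d ∘ Fin.castSucc)
      (hv.comp Fin.strictMono_castSucc.monotone) fun i => hprefix_castSucc i ▸ hprefix _
    have hlast : v (Fin.last n).castSucc ≤ v (Fin.last (n + 1)) := hv (Fin.le_last _)
    rw [Fin.sum_univ_castSucc, Fin.sum_univ_castSucc (f := d)]
    calc ∑ i : Fin (n + 1), v i.castSucc * d i.castSucc + v (Fin.last _) * d (Fin.last _)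
        ≤ v (Fin.last n).castSucc * ∑ i : Fin (n + 1), d i.castSucc
            + v (Fin.last _) * d (Fin.last _) := by simpa using hrestrict
      _ ≤ v (Fin.last (n + 1)) * ∑ i : Fin (n + 1), d i.castSucc
            + v (Fin.last _) * d (Fin.last _) := by gcongr
      _ = _ := by ring

theorem sum_mul_nonpos_of_prefix_sum_nonneg {n : ℕ} {v d : Fin (n + 1) → ℝ}
    (hv : Monotone v) (hprefix : ∀ i, 0 ≤ ∑ l ∈ univ.filter (· < i), d l)
    (htotal : ∑ l, d l = 0) :
    ∑ i, v i * d i ≤ 0 := by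
  simpa [htotal] using sum_mul_le_mul_sum_of_prefix_sum_nonneg hv hprefix

theorem sum_mul_nonpos_of_tail_nonpos {n : ℕ} {v d : Fin (n + 1) → ℝ} (hv : Monotone v)
    (htotal : ∑ l, d l = 0) {j : Fin (n + 1)} (htail : ∀ l, j ≤ l → d l ≤ 0)
    (hprefix : ∀ i : Fin (n + 1), 0 < (i : ℕ) → i < j →
      0 ≤ ∑ l ∈ univ.filter (· < i), d l) :
    ∑ i, v i * d i ≤ 0 := by
  refine sum_mul_nonpos_of_prefix_sum_nonneg hv (fun i => ?_) htotal
  rcases lt_or_ge i j with hij | hji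
  · rcases Nat.eq_zero_or_pos i with hi | hi
    · have hempty : univ.filter (· < i) = ∅ := by
        ext l; simp [Fin.lt_def, hi]
      simp [hempty]
    · exact hprefix i hi hij
  · have hsplit := sum_filter_add_sum_filter_not univ (· < i) d
    have hupper : ∑ l ∈ univ.filter (fun l => ¬ l < i), d l ≤ 0 :=
      sum_nonpos fun l hl => htail l (hji.trans (not_lt.1 (mem_filter.1 hl).2))
    linarith

theorem vecMul_apply_le_of_sum_mul_sub_nonpos {ι : Type*} [Fintype ι] {v : ι → ℝ}
    {P P' : Matrix ι ι ℝ} {j j' : ι} (h : ∑ i, v i * (P i j - P' i j') ≤ 0) :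
    (v ᵥ* P) j ≤ (v ᵥ* P') j' := by
  simp only [mul_sub, sum_sub_distrib, sub_nonpos] at h
  exact h

theorem vecMul_le_vecMul_of_prefix_sum {n : ℕ} {P P' : Matrix (Fin (n + 1)) (Fin (n + 1)) ℝ}
    (hPcol : ∀ j, ∑ i, P i j = 1) (hP'col : ∀ j, ∑ i, P' i j = 1)
    (hP : P.IsUpperTriangular) (hP' : P'.IsUpperTriangular) (hdiag : ∀ j, P j j ≤ P' j j)
    (hprefix : ∀ i j : Fin (n + 1), 0 < (i : ℕ) → i < j →
      0 ≤ ∑ l ∈ univ.filter (· < i), (P l j - P' l j))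
    {v : Fin (n + 1) → ℝ} (hv : Monotone v) :
    v ᵥ* P ≤ v ᵥ* P' := by
  intro j
  refine vecMul_apply_le_of_sum_mul_sub_nonpos <|
    sum_mul_nonpos_of_tail_nonpos hv (by simp [sum_sub_distrib, hPcol, hP'col]) (j := j)
      (fun l hjl => ?_) (fun i hi hij => hprefix i j hi hij)
  rcases hjl.eq_or_lt with rfl | hjl
  · exact sub_nonpos.2 (hdiag _)
  · simp [hP hjl, hP' hjl]

theorem monotone_vecMul_of_prefix_sum {n : ℕ} {P : Matrix (Fin (n + 1)) (Fin (n + 1)) ℝ}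
    (hnonneg : ∀ i j, 0 ≤ P i j) (hcol : ∀ j, ∑ i, P i j = 1) (hP : P.IsUpperTriangular)
    (hprefix : ∀ (i : Fin (n + 1)) (j : Fin n), (i : ℕ) < (j : ℕ) →
      0 ≤ ∑ l ∈ univ.filter (· ≤ i), (P l j.castSucc - P l j.succ))
    {v : Fin (n + 1) → ℝ} (hv : Monotone v) :
    Monotone (v ᵥ* P) := by
  refine Fin.monotone_iff_le_succ.2 fun j => vecMul_apply_le_of_sum_mul_sub_nonpos <|
    sum_mul_nonpos_of_tail_nonpos hv (by simp [sum_sub_distrib, hcol]) (j := j.succ)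
      (fun l hjl => ?_) (fun i hi hij => ?_)
  · have hzero : P l j.castSucc = 0 := hP (Fin.castSucc_lt_succ.trans_le hjl)
    rw [hzero, zero_sub, neg_nonpos]
    exact hnonneg l j.succ
  · obtain ⟨i, rfl⟩ := Fin.exists_succ_eq.2 (Fin.pos_iff_ne_zero.1 hi)
    have hfilter : univ.filter (· < i.succ) = univ.filter (· ≤ i.castSucc) := by
      ext l; simp only [mem_filter, mem_univ, true_and, Fin.le_castSucc_iff]
    rw [hfilter]
    exact hprefix i.castSucc j (Fin.succ_lt_succ_iff.1 hij)

theorem vecMul_pow_le_of_dominates {ι : Type*} [Fintype ι] [DecidableEq ι] [Preorder ι]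
    {P P' : Matrix ι ι ℝ} (hnonneg : ∀ i j, 0 ≤ P i j)
    (hdom : ∀ v : ι → ℝ, Monotone v → v ᵥ* P ≤ v ᵥ* P')
    (hmono : ∀ v : ι → ℝ, Monotone v → Monotone (v ᵥ* P'))
    {e : ι → ℝ} (he : Monotone e) (t : ℕ) :
    e ᵥ* P ^ t ≤ e ᵥ* P' ^ t ∧ Monotone (e ᵥ* P' ^ t) := by
  induction t with
  | zero => simpa using he
  | succ t ih =>
    obtain ⟨hle, hmono_t⟩ := ih
    simp only [pow_succ, ← vecMul_vecMul]
    refine ⟨fun j => ?_, hmono _ hmono_t⟩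
    calc (e ᵥ* P ^ t ᵥ* P) j ≤ (e ᵥ* P' ^ t ᵥ* P) j :=
          sum_le_sum fun i _ => mul_le_mul_of_nonneg_right (hle i) (hnonneg i j)
      _ ≤ (e ᵥ* P' ^ t ᵥ* P') j := hdom _ hmono_t j

theorem Matrix.IsUpperTriangular.pow_succ_succ {α : Type*} [Semiring α] {n : ℕ}
    {P : Matrix (Fin (n + 1)) (Fin (n + 1)) α} (hP : P.IsUpperTriangular) (t : ℕ)
    (i j : Fin n) :
    (P ^ t) i.succ j.succ = (P.submatrix Fin.succ Fin.succ ^ t) i j := by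
  induction t generalizing j with
  | zero => simp [one_apply]
  | succ t ih =>
    have hcol0 : (P ^ t) i.succ 0 = 0 := hP.pow t (Fin.succ_pos i)
    simp [pow_succ, mul_apply, Fin.sum_univ_succ, hcol0, ih]

theorem Matrix.IsUpperTriangular.vecMul_pow_succ {α : Type*} [Semiring α] {n : ℕ}
    {P : Matrix (Fin (n + 1)) (Fin (n + 1)) α} (hP : P.IsUpperTriangular)
    {e : Fin (n + 1) → α} (he : e 0 = 0) (t : ℕ) (j : Fin n) :
    (e ᵥ* P ^ t) j.succ = ((fun i => e i.succ) ᵥ* P.submatrix Fin.succ Fin.succ ^ t) j := by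
  simp [vecMul, dotProduct, Fin.sum_univ_succ, he, hP.pow_succ_succ]

section PowerFactor

variable (a : ℕ → ℕ → ℝ) {i j k : ℕ}

theorem powerFactor_self (j : ℕ) : powerFactor a j j j = a j j := by
  rw [powerFactor]; simp

theorem powerFactor_eq_zero (h : k < i ∨ j < k) : powerFactor a i j k = 0 := by
  rw [powerFactor, if_neg (by omega), dif_pos h]

theorem powerFactor_of_le_of_lt (hik : i ≤ k) (hkj : k < j) :
    powerFactor a i j k = (∑ l ∈ Ico k j, powerFactor a i l k * a l j) / (a k k - a j j) := by
  rw [powerFactor, if_neg (by omega), dif_neg (by omega), dif_pos hkj,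
    sum_attach (Ico k j) fun l => powerFactor a i l k * a l j]

theorem powerFactor_last (hij : i < j) :
    powerFactor a i j j = a i j - ∑ l ∈ Ico i j, powerFactor a i j l := by
  rw [powerFactor, if_neg (by omega), dif_neg (by omega), dif_neg (lt_irrefl j),
    sum_attach (Ico i j) fun l => powerFactor a i j l]

theorem sum_Icc_powerFactor (hij : i ≤ j) : ∑ k ∈ Icc i j, powerFactor a i j k = a i j := by
  rcases hij.eq_or_lt with rfl | hij
  · simp [powerFactor_self]
  · rw [← Ico_add_one_right_eq_Icc, sum_Ico_succ_top hij.le, powerFactor_last a hij]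
    ring

theorem sum_Icc_powerFactor_mul (hik : i ≤ k) (hkj : k ≤ j) (hne : k ≠ j → a k k ≠ a j j) :
    ∑ l ∈ Icc k j, powerFactor a i l k * a l j = powerFactor a i j k * a k k := by
  rcases hkj.eq_or_lt with rfl | hkj
  · simp
  · have hsub : a k k - a j j ≠ 0 := sub_ne_zero.2 (hne hkj.ne)
    have hIco : ∑ l ∈ Ico k j, powerFactor a i l k * a l j
        = powerFactor a i j k * (a k k - a j j) := by
      rw [powerFactor_of_le_of_lt a hik hkj, div_mul_cancel₀ _ hsub]
    rw [← Ico_add_one_right_eq_Icc, sum_Ico_succ_top hkj.le, hIco]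
    ring

variable {a} {n : ℕ}

theorem sum_range_powerFactor (hlow : ∀ i j, j < i → i < n → a i j = 0)
    (hi : i < n) (hj : j < n) :
    ∑ k ∈ range n, powerFactor a i j k = a i j := by
  rcases le_or_gt i j with hij | hji
  · rw [← sum_subset (fun k hk => mem_range.2 ((mem_Icc.1 hk).2.trans_lt hj)),
      sum_Icc_powerFactor a hij]
    intro k _ hk
    exact powerFactor_eq_zero a (by simp only [mem_Icc] at hk; omega)
  · rw [hlow i j hji hi]
    exact sum_eq_zero fun k _ => powerFactor_eq_zero a (by omega)

theorem sum_range_powerFactor_mul (hlow : ∀ i j, j < i → i < n → a i j = 0)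
    (hinj : Set.InjOn (fun m => a m m) (Set.Iio n)) (hk : k < n) (hj : j < n) :
    ∑ l ∈ range n, powerFactor a i l k * a l j = powerFactor a i j k * a k k := by
  have hIcc : ∑ l ∈ range n, powerFactor a i l k * a l j
      = ∑ l ∈ Icc k j, powerFactor a i l k * a l j := by
    refine (sum_subset (fun l hl => mem_range.2 ((mem_Icc.1 hl).2.trans_lt hj)) ?_).symm
    intro l hl hlkj
    rcases lt_or_ge l k with hlk | hkl
    · rw [powerFactor_eq_zero a (Or.inr hlk), zero_mul]
    · rw [hlow l j (by simp only [mem_Icc] at hlkj; omega) (mem_range.1 hl), mul_zero]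
  rw [hIcc]
  rcases lt_or_ge j k with hjk | hkj
  · simp [Icc_eq_empty_of_lt hjk, powerFactor_eq_zero a (Or.inr hjk)]
  rcases lt_or_ge k i with hki | hik
  · simp [powerFactor_eq_zero a (Or.inl hki)]
  exact sum_Icc_powerFactor_mul a hik hkj fun hne h => hne (hinj hk hj h)

end PowerFactor

theorem pow_apply_eq_sum_powerFactor {n : ℕ} {M : Matrix (Fin n) (Fin n) ℝ}
    (hM : M.IsUpperTriangular) {a : ℕ → ℕ → ℝ} (ha : ∀ i j : Fin n, a i j = M i j)
    (hinj : Set.InjOn (fun m => a m m) (Set.Iio n)) {t : ℕ} (ht : 1 ≤ t) (i j : Fin n) :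
    (M ^ t) i j = ∑ k : Fin n, powerFactor a i j k * M k k ^ (t - 1) := by
  have hlow : ∀ i j, j < i → i < n → a i j = 0 := fun i j hji hi =>
    (ha ⟨i, hi⟩ ⟨j, hji.trans hi⟩).trans (hM hji)
  induction t, ht using Nat.le_induction generalizing j with
  | base =>
    simp only [pow_one, Nat.sub_self, pow_zero, mul_one]
    rw [Fin.sum_univ_eq_sum_range (fun k => powerFactor a i j k),
      sum_range_powerFactor hlow i.isLt j.isLt, ha]
  | succ t ht ih =>
    have hstep : ∀ k : Fin n,
        ∑ l : Fin n, powerFactor a i l k * M l j = powerFactor a i j k * M k k := by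
      intro k
      simp only [← ha]
      rw [Fin.sum_univ_eq_sum_range (fun l => powerFactor a i l k * a l j),
        sum_range_powerFactor_mul hlow hinj k.isLt j.isLt]
    calc (M ^ (t + 1)) i j
        = ∑ l : Fin n, ∑ k : Fin n, powerFactor a i l k * M k k ^ (t - 1) * M l j := by
          simp only [pow_succ, mul_apply, ih, sum_mul]
      _ = ∑ k : Fin n, (∑ l : Fin n, powerFactor a i l k * M l j) * M k k ^ (t - 1) := by
          rw [sum_comm]; simp only [sum_mul]; congr! 2 with k _ l _; ring
      _ = ∑ k : Fin n, powerFactor a i j k * M k k ^ (t + 1 - 1) := by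
          refine sum_congr rfl fun k _ => ?_
          rw [hstep, Nat.add_sub_cancel, mul_assoc, ← pow_succ', Nat.sub_add_cancel ht]

theorem dotProduct_pow_mulVec_eq_sum_powerFactor {n : ℕ} {M : Matrix (Fin n) (Fin n) ℝ}
    (hM : M.IsUpperTriangular) {a : ℕ → ℕ → ℝ} (ha : ∀ i j : Fin n, a i j = M i j)
    (hinj : Set.InjOn (fun m => a m m) (Set.Iio n)) {t : ℕ} (ht : 1 ≤ t) (u p : Fin n → ℝ) :
    u ⬝ᵥ (M ^ t *ᵥ p) = ∑ k : Fin n, ∑ i ∈ Iic k, ∑ j ∈ Ici k,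
      u i * powerFactor a i j k * p j * M k k ^ (t - 1) := by
  calc u ⬝ᵥ (M ^ t *ᵥ p)
      = ∑ i : Fin n, ∑ j : Fin n, ∑ k : Fin n,
          u i * powerFactor a i j k * p j * M k k ^ (t - 1) := by
        simp only [dotProduct, mulVec, pow_apply_eq_sum_powerFactor hM ha hinj ht, mul_sum,
          sum_mul]
        congr! 3 with i _ j _ k _
        ring
    _ = ∑ k : Fin n, ∑ i : Fin n, ∑ j : Fin n,
          u i * powerFactor a i j k * p j * M k k ^ (t - 1) :=
        (sum_congr rfl fun _ _ => sum_comm).trans sum_comm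
    _ = _ := by
        refine sum_congr rfl fun k _ => ?_
        rw [← sum_subset (subset_univ (Iic k)) fun i _ hi => sum_eq_zero fun j _ => ?_]
        · refine sum_congr rfl fun i _ => ?_
          refine (sum_subset (subset_univ (Ici k)) fun j _ hj => ?_).symm
          rw [powerFactor_eq_zero a (Or.inr (by simpa using hj)), mul_zero, zero_mul, zero_mul]
        · rw [powerFactor_eq_zero a (Or.inl (by simpa using hi)), mul_zero, zero_mul, zero_mul]

theorem stmt_14_general (L : ℕ)
    (P P' : Matrix (Fin (L + 1)) (Fin (L + 1)) ℝ)
    (hPnn : ∀ i j, 0 ≤ P i j) (hP'nn : ∀ i j, 0 ≤ P' i j)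
    (hPcol : ∀ j, ∑ i, P i j = 1) (hP'col : ∀ j, ∑ i, P' i j = 1)
    (hPtri : ∀ i j, j < i → P i j = 0) (hP'tri : ∀ i j, j < i → P' i j = 0)
    (hP00 : P 0 0 = 1) (hP'00 : P' 0 0 = 1)
    (hcond1 : ∀ j : Fin L, P j.succ j.succ ≤ P' j.succ j.succ)
    (hcond2 : ∀ i j : Fin (L + 1), 0 < (i : ℕ) → i < j →
      0 ≤ ∑ l ∈ Finset.univ.filter (fun l : Fin (L + 1) => l < i), (P l j - P' l j))
    (hcond3 : ∀ (i : Fin (L + 1)) (j : Fin L), (i : ℕ) < (j : ℕ) →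
      0 ≤ ∑ l ∈ Finset.univ.filter (fun l : Fin (L + 1) => l ≤ i),
        (P' l j.castSucc - P' l j.succ))
    (hdistinct : ∀ i j : Fin L, i ≠ j → P' i.succ i.succ ≠ P' j.succ j.succ)
    (R R' : Matrix (Fin L) (Fin L) ℝ)
    (hR : ∀ i j : Fin L, R i j = P i.succ j.succ)
    (hR' : ∀ i j : Fin L, R' i j = P' i.succ j.succ)
    (A' : ℕ → ℕ → ℝ) (hA' : ∀ i j : Fin L, A' (i : ℕ) (j : ℕ) = R' i j)
    (e : Fin (L + 1) → ℝ) (he0 : e 0 = 0)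
    (henn : ∀ i : Fin L, 0 ≤ e i.succ)
    (hemono : ∀ i j : Fin L, i ≤ j → e i.succ ≤ e j.succ)
    (p0 : Fin L → ℝ) (hp0 : ∀ i, 0 ≤ p0 i) :
    ∀ t : ℕ, 1 ≤ t →
      (fun i : Fin L => e i.succ) ⬝ᵥ ((R ^ t) *ᵥ p0)
        ≤ ∑ k : Fin L, ∑ i ∈ Finset.Iic k, ∑ j ∈ Finset.Ici k,
            e i.succ * powerFactor A' (i : ℕ) (j : ℕ) (k : ℕ) * p0 j
              * (R' k k) ^ (t - 1) := by
  intro t ht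
  have hP : P.IsUpperTriangular := fun i j h => hPtri i j h
  have hP' : P'.IsUpperTriangular := fun i j h => hP'tri i j h
  have hdiag : ∀ j, P j j ≤ P' j j := Fin.cases (by rw [hP00, hP'00]) hcond1
  have he : Monotone e := Fin.monotone_of_monotone_succ (fun i => he0 ▸ henn i) hemono
  obtain ⟨hle, -⟩ := vecMul_pow_le_of_dominates hPnn
    (fun v hv => vecMul_le_vecMul_of_prefix_sum hPcol hP'col hP hP' hdiag hcond2 hv)
    (fun v hv => monotone_vecMul_of_prefix_sum hP'nn hP'col hP' hcond3 hv) he t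
  have hRle : (fun i => e i.succ) ᵥ* R ^ t ≤ (fun i => e i.succ) ᵥ* R' ^ t := fun j => by
    rw [show R = P.submatrix Fin.succ Fin.succ from Matrix.ext hR,
      show R' = P'.submatrix Fin.succ Fin.succ from Matrix.ext hR',
      ← hP.vecMul_pow_succ he0, ← hP'.vecMul_pow_succ he0]
    exact hle j.succ
  have hinj : Set.InjOn (fun m => A' m m) (Set.Iio L) := fun k hk j hj hkj => by
    by_contra hne
    refine hdistinct ⟨k, hk⟩ ⟨j, hj⟩ (by simpa [Fin.ext_iff] using hne) ?_
    rw [← hR', ← hR', ← hA', ← hA']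
    exact hkj
  have hR'tri : R'.IsUpperTriangular := fun i j h => by
    rw [hR']
    exact hP' (Fin.succ_lt_succ_iff.2 h)
  calc (fun i => e i.succ) ⬝ᵥ (R ^ t *ᵥ p0)
      = ((fun i => e i.succ) ᵥ* R ^ t) ⬝ᵥ p0 := dotProduct_mulVec _ _ _
    _ ≤ ((fun i => e i.succ) ᵥ* R' ^ t) ⬝ᵥ p0 :=
        dotProduct_le_dotProduct_of_nonneg_right hRle hp0
    _ = (fun i => e i.succ) ⬝ᵥ (R' ^ t *ᵥ p0) := (dotProduct_mulVec _ _ _).symm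
    _ = _ := dotProduct_pow_mulVec_eq_sum_powerFactor hR'tri hA' hinj ht _ _

/-- upper bound on the error via the power factors of a slower
auxiliary upper triangular transition matrix `P'`. -/
theorem stmt_14 (L : ℕ) (hL : 1 ≤ L)
    (P P' : Matrix (Fin (L + 1)) (Fin (L + 1)) ℝ)
    (hPnn : ∀ i j, 0 ≤ P i j) (hP'nn : ∀ i j, 0 ≤ P' i j)
    (hPcol : ∀ j, ∑ i, P i j = 1) (hP'col : ∀ j, ∑ i, P' i j = 1)
    (hPtri : ∀ i j, j < i → P i j = 0) (hP'tri : ∀ i j, j < i → P' i j = 0)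
    (hP00 : P 0 0 = 1) (hP'00 : P' 0 0 = 1)
    (hcond1 : ∀ j : Fin L, P j.succ j.succ ≤ P' j.succ j.succ)
    (hcond2 : ∀ i j : Fin (L + 1), 0 < (i : ℕ) → i < j →
      0 ≤ ∑ l ∈ Finset.univ.filter (fun l : Fin (L + 1) => l < i), (P l j - P' l j))
    (hcond3 : ∀ (i : Fin (L + 1)) (j : Fin L), (i : ℕ) < (j : ℕ) →
      0 ≤ ∑ l ∈ Finset.univ.filter (fun l : Fin (L + 1) => l ≤ i),
        (P' l j.castSucc - P' l j.succ))
    (hdistinct : ∀ i j : Fin L, i ≠ j → P' i.succ i.succ ≠ P' j.succ j.succ)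
    (R R' : Matrix (Fin L) (Fin L) ℝ)
    (hR : ∀ i j : Fin L, R i j = P i.succ j.succ)
    (hR' : ∀ i j : Fin L, R' i j = P' i.succ j.succ)
    (A' : ℕ → ℕ → ℝ) (hA' : ∀ i j : Fin L, A' (i : ℕ) (j : ℕ) = R' i j)
    (e : Fin (L + 1) → ℝ) (he0 : e 0 = 0)
    (henn : ∀ i : Fin L, 0 ≤ e i.succ)
    (hemono : ∀ i j : Fin L, i ≤ j → e i.succ ≤ e j.succ)
    (p0 : Fin L → ℝ) (hp0 : ∀ i, 0 ≤ p0 i) :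
    ∀ t : ℕ, 1 ≤ t →
      (fun i : Fin L => e i.succ) ⬝ᵥ ((R ^ t) *ᵥ p0)
        ≤ ∑ k : Fin L, ∑ i ∈ Finset.Iic k, ∑ j ∈ Finset.Ici k,
            e i.succ * powerFactor A' (i : ℕ) (j : ℕ) (k : ℕ) * p0 j
              * (R' k k) ^ (t - 1) :=
  stmt_14_general L P P' hPnn hP'nn hPcol hP'col hPtri hP'tri hP00 hP'00 hcond1 hcond2 hcond3
    hdistinct R R' hR hR' A' hA' e he0 henn hemono p0 hp0
end

section
/- Let n ≥ 1 and L ≥ 1, and let P = [p_{i,j}] (i,j ∈ {0,1,…,L}) be a column-stochastic real matrix with p_{0,0} = 1. Let e_0 = 0 and e_1,…,e_L > 0, and assume that for every j ∈ {1,…,L} the drift satisfies Σ_{k=0}^{L} p_{k,j}(e_j − e_k) ≥ (e_j/n)(1 − 1/n)^{n−1}. Let R = [p_{i,j}]_{i,j=1,…,L} and let p⁰ ∈ ℝᴸ be entrywise nonnegative with Σ_i p⁰_i ≤ 1. Then for every t ≥ 0, eᵀ Rᵗ p⁰ ≤ (1 − 1/(e·n))ᵗ · eᵀ p⁰, where e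 in the base denotes Euler's number. -/
/-!
Write `w = (e_1, …, e_L)` for the error restricted to the non-optimal states. The drift condition,
together with `∑ₖ p_{k,j} = 1` and `e_0 = 0`, says exactly that the row vector `wᵀ R` is bounded
entrywise by `(1 - δ) wᵀ`, where `δ = (1/n)(1 - 1/n)^{n-1} ≥ 1/(e·n)` since `(1 + 1/m)^m ≤ e`.
As `R` is entrywise nonnegative, this bound iterates to `wᵀ Rᵗ ≤ (1 - 1/(e·n))ᵗ wᵀ`, and pairing
with the nonnegative vector `p⁰` gives the claim.
-/

open Matrix

theorem Real.exp_neg_one_le_one_sub_inv_pow (n : ℕ) (hn : 1 ≤ n) :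
    Real.exp (-1) ≤ (1 - 1 / (n : ℝ)) ^ (n - 1) := by
  obtain ⟨m, rfl⟩ := Nat.exists_eq_add_of_le' hn
  rcases eq_or_ne m 0 with rfl | hm
  · simp
  have hbase : 1 - 1 / ((m + 1 : ℕ) : ℝ) = (1 + (m : ℝ)⁻¹)⁻¹ := by
    have : (m : ℝ) ≠ 0 := Nat.cast_ne_zero.mpr hm
    push_cast
    field_simp
    ring
  rw [Nat.add_sub_cancel, hbase, inv_pow, Real.exp_neg]
  exact inv_anti₀ (by positivity) Real.one_add_inv_pow_le_exp

namespace Matrix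

section NonnegMatrix

variable {ι α : Type*} [Fintype ι] [CommSemiring α] [PartialOrder α] [IsOrderedRing α]

theorem vecMul_le_vecMul_of_nonneg {u v : ι → α} {M : Matrix ι ι α} (huv : u ≤ v)
    (hM : ∀ i j, 0 ≤ M i j) : u ᵥ* M ≤ v ᵥ* M :=
  fun j => dotProduct_le_dotProduct_of_nonneg_right huv (fun i => hM i j)

variable [DecidableEq ι]

theorem vecMul_pow_le_of_vecMul_le {w : ι → α} {M : Matrix ι ι α} {c : α}
    (hM : ∀ i j, 0 ≤ M i j) (hc : 0 ≤ c) (hw : w ᵥ* M ≤ c • w) (t : ℕ) :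
    w ᵥ* M ^ t ≤ c ^ t • w := by
  induction t with
  | zero => simp
  | succ t ih =>
    calc w ᵥ* M ^ (t + 1) = (w ᵥ* M ^ t) ᵥ* M := by rw [pow_succ, vecMul_vecMul]
      _ ≤ (c ^ t • w) ᵥ* M := vecMul_le_vecMul_of_nonneg ih hM
      _ = c ^ t • (w ᵥ* M) := smul_vecMul _ _ _
      _ ≤ c ^ t • (c • w) := smul_le_smul_of_nonneg_left hw (pow_nonneg hc t)
      _ = c ^ (t + 1) • w := by rw [smul_smul, pow_succ]

theorem dotProduct_pow_mulVec_le {w q : ι → α} {M : Matrix ι ι α} {c : α}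
    (hM : ∀ i j, 0 ≤ M i j) (hc : 0 ≤ c) (hw : w ᵥ* M ≤ c • w) (hq : 0 ≤ q) (t : ℕ) :
    w ⬝ᵥ (M ^ t *ᵥ q) ≤ c ^ t * (w ⬝ᵥ q) := by
  rw [dotProduct_mulVec, ← smul_eq_mul, ← smul_dotProduct]
  exact dotProduct_le_dotProduct_of_nonneg_right (vecMul_pow_le_of_vecMul_le hM hc hw t) hq

end NonnegMatrix

theorem vecMul_submatrix_succ_le_of_drift {m : ℕ} (P : Matrix (Fin (m + 1)) (Fin (m + 1)) ℝ)
    (hPcol : ∀ j, ∑ i, P i j = 1) (e : Fin (m + 1) → ℝ) (he0 : e 0 = 0) (c : ℝ)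
    (hdrift : ∀ j : Fin m, (1 - c) * e j.succ ≤ ∑ k, P k j.succ * (e j.succ - e k)) :
    (fun i => e i.succ) ᵥ* P.submatrix Fin.succ Fin.succ ≤ c • fun i => e i.succ := by
  intro j
  have hexpected : ∑ k, P k j.succ * (e j.succ - e k) = e j.succ - ∑ k, e k * P k j.succ := by
    simp only [mul_sub, Finset.sum_sub_distrib, ← Finset.sum_mul, hPcol, mul_one, mul_comm]
  have hrestrict : ((fun i => e i.succ) ᵥ* P.submatrix Fin.succ Fin.succ) j
      = ∑ k, e k * P k j.succ := by
    simp [vecMul, dotProduct, Fin.sum_univ_succ, he0]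
  rw [hrestrict, Pi.smul_apply, smul_eq_mul]
  linarith [hdrift j]

end Matrix

theorem stmt_17_general (n L : ℕ) (hn : 1 ≤ n)
    (P : Matrix (Fin (L + 1)) (Fin (L + 1)) ℝ)
    (hPnn : ∀ i j, 0 ≤ P i j) (hPcol : ∀ j, ∑ i, P i j = 1)
    (e : Fin (L + 1) → ℝ) (he0 : e 0 = 0) (hepos : ∀ j : Fin L, 0 < e j.succ)
    (hdrift : ∀ j : Fin L,
      (e j.succ / (n : ℝ)) * (1 - 1 / (n : ℝ)) ^ (n - 1)
        ≤ ∑ k, P k j.succ * (e j.succ - e k))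
    (R : Matrix (Fin L) (Fin L) ℝ) (hR : ∀ i j : Fin L, R i j = P i.succ j.succ)
    (p0 : Fin L → ℝ) (hp0 : ∀ i, 0 ≤ p0 i) :
    ∀ t : ℕ, (fun i : Fin L => e i.succ) ⬝ᵥ ((R ^ t) *ᵥ p0)
      ≤ (1 - 1 / (Real.exp 1 * (n : ℝ))) ^ t
          * ((fun i : Fin L => e i.succ) ⬝ᵥ p0) := by
  have hRsub : R = P.submatrix Fin.succ Fin.succ := Matrix.ext hR
  have hc : 0 ≤ 1 - 1 / (Real.exp 1 * (n : ℝ)) := by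
    have : 1 ≤ Real.exp 1 * (n : ℝ) :=
      one_le_mul_of_one_le_of_one_le (Real.one_le_exp zero_le_one) (Nat.one_le_cast.mpr hn)
    linarith [div_le_one_of_le₀ this (zero_le_one.trans this)]
  have hdrift' (j : Fin L) : (1 - (1 - 1 / (Real.exp 1 * (n : ℝ)))) * e j.succ
      ≤ ∑ k, P k j.succ * (e j.succ - e k) :=
    calc (1 - (1 - 1 / (Real.exp 1 * (n : ℝ)))) * e j.succ
        = e j.succ / n * Real.exp (-1) := by rw [Real.exp_neg]; ring
      _ ≤ e j.succ / n * (1 - 1 / (n : ℝ)) ^ (n - 1) :=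
        mul_le_mul_of_nonneg_left (Real.exp_neg_one_le_one_sub_inv_pow n hn)
          (div_nonneg (hepos j).le n.cast_nonneg)
      _ ≤ _ := hdrift j
  subst hRsub
  exact dotProduct_pow_mulVec_le (fun i j => hPnn _ _) hc
    (vecMul_submatrix_succ_le_of_drift P hPcol e he0 _ hdrift') hp0

/-- abstract OneMax analysis: if the drift at every non-optimal
state `j` is at least `(e_j/n)(1-1/n)^{n-1}`, then the error satisfies
`e^{[t]} ≤ (1 - 1/(e·n))ᵗ e^{[0]}`. -/
theorem stmt_17 (n L : ℕ) (hn : 1 ≤ n) (hL : 1 ≤ L)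
    (P : Matrix (Fin (L + 1)) (Fin (L + 1)) ℝ)
    (hPnn : ∀ i j, 0 ≤ P i j) (hPcol : ∀ j, ∑ i, P i j = 1) (hP00 : P 0 0 = 1)
    (e : Fin (L + 1) → ℝ) (he0 : e 0 = 0) (hepos : ∀ j : Fin L, 0 < e j.succ)
    (hdrift : ∀ j : Fin L,
      (e j.succ / (n : ℝ)) * (1 - 1 / (n : ℝ)) ^ (n - 1)
        ≤ ∑ k, P k j.succ * (e j.succ - e k))
    (R : Matrix (Fin L) (Fin L) ℝ) (hR : ∀ i j : Fin L, R i j = P i.succ j.succ)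
    (p0 : Fin L → ℝ) (hp0 : ∀ i, 0 ≤ p0 i) (hp0sum : ∑ i, p0 i ≤ 1) :
    ∀ t : ℕ, (fun i : Fin L => e i.succ) ⬝ᵥ ((R ^ t) *ᵥ p0)
      ≤ (1 - 1 / (Real.exp 1 * (n : ℝ))) ^ t
          * ((fun i : Fin L => e i.succ) ⬝ᵥ p0) :=
  stmt_17_general n L hn P hPnn hPcol e he0 hepos hdrift R hR p0 hp0
end
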